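/- Let Σ and Σ̂ be real symmetric positive semidefinite d×d matrices, λ > 0, b > 0, and 0 ≤ c̃ < 1/2 with ‖(Σ + λI)^{-1/2}·(Σ − Σ̂)·(Σ + λI)^{-1/2}‖ ≤ c̃. Let g : ℝ → ℝ satisfy, for every eigenvalue σ of Σ̂, |g(σ)| ≤ b/λ and |g(σ)·σ| ≤ b. Then ‖(Σ + λI)^{1/2}·g(Σ̂)·(Σ + λI)^{1/2}‖ ≤ 2b·√(1/(1 − 2c̃)). -/

import Mathlib

open Matrix MeasureTheory

/-- The operator norm of a real `d × d` matrix induced by the Euclidean norm on `ℝ^d`. -/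
noncomputable def opNorm {d : ℕ} (A : Matrix (Fin d) (Fin d) ℝ) : ℝ :=
  ‖Matrix.toEuclideanCLM (𝕜 := ℝ) A‖

/-- The Euclidean norm `‖x‖₂` of a vector `x ∈ ℝ^d`. -/
noncomputable def enorm2 {d : ℕ} (x : Fin d → ℝ) : ℝ :=
  Real.sqrt (∑ i, x i ^ 2)

/-- Apply a scalar function to the eigenvalues of a symmetric matrix (continuous
functional calculus); junk value `0` if the matrix is not symmetric. -/
noncomputable def matFun {d : ℕ} (A : Matrix (Fin d) (Fin d) ℝ) (h : ℝ → ℝ) :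
    Matrix (Fin d) (Fin d) ℝ :=
  if hA : A.IsHermitian then
    (hA.eigenvectorUnitary : Matrix (Fin d) (Fin d) ℝ) *
      Matrix.diagonal (fun i => h (hA.eigenvalues i)) *
      star (hA.eigenvectorUnitary : Matrix (Fin d) (Fin d) ℝ)
  else 0

/-!
Write `P = Σ + λ` and `Q = Σ̂ + λ`, so that `Σ - Σ̂ = P - Q`. The hypothesis gives
`P^{-1/2} (P - Q) P^{-1/2} ≤ c̃`, and conjugating by `P^{1/2}` turns it into `(1 - c̃) P ≤ Q`.
Hence `‖P^{1/2} Q^{-1/2}‖² = ‖Q^{-1/2} P Q^{-1/2}‖ ≤ 1 / (1 - c̃)`. In the factorisation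
`P^{1/2} g(Σ̂) P^{1/2} = (P^{1/2} Q^{-1/2}) (Q^{1/2} g(Σ̂) Q^{1/2}) (Q^{-1/2} P^{1/2})` the middle
factor is `x ↦ (x + λ) g(x)` applied to `Σ̂`, of norm at most `2b`, and the two outer factors are
adjoint to each other. This gives the bound `2b / (1 - c̃)`, which is at most `2b √(1 / (1 - 2c̃))`
because `(1 - c̃)² ≥ 1 - 2c̃`.
-/

section RealCStar

variable {A : Type*} [NormedRing A] [StarRing A]

lemma norm_mul_mul_star_le [CStarRing A] (y z : A) : ‖y * z * star y‖ ≤ ‖y‖ ^ 2 * ‖z‖ := by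
  calc ‖y * z * star y‖ ≤ ‖y‖ * ‖z‖ * ‖star y‖ := norm_mul₃_le
    _ = ‖y‖ ^ 2 * ‖z‖ := by rw [norm_star]; ring

variable [NormedAlgebra ℝ A] [PartialOrder A] [StarOrderedRing A]
  [IsometricContinuousFunctionalCalculus ℝ A IsSelfAdjoint]

lemma IsSelfAdjoint.le_algebraMap_of_norm_le {a : A} (ha : IsSelfAdjoint a) {r : ℝ}
    (h : ‖a‖ ≤ r) : a ≤ algebraMap ℝ A r :=
  le_algebraMap_of_spectrum_le fun x hx => (Real.le_norm_self x).trans <|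
    (IsometricContinuousFunctionalCalculus.norm_spectrum_le a hx ha).trans h

lemma le_smul_mul_self_of_norm_conj_le {t u x : A} (ht : IsSelfAdjoint t) (hu : IsSelfAdjoint u)
    (htu : t * u = 1) (hx : IsSelfAdjoint x) {c : ℝ} (h : ‖u * x * u‖ ≤ c) :
    x ≤ c • (t * t) := by
  have hut : u * t = 1 := by simpa [ht.star_eq, hu.star_eq] using congrArg star htu
  have hle : u * x * u ≤ algebraMap ℝ A c := (hx.conjugate_self hu).le_algebraMap_of_norm_le h
  calc x = t * (u * x * u) * t := by
        simp only [← mul_assoc, htu, one_mul]; rw [mul_assoc, hut, mul_one]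
    _ ≤ t * algebraMap ℝ A c * t := ht.conjugate_le_conjugate hle
    _ = c • (t * t) := by
        rw [Algebra.algebraMap_eq_smul_one, mul_smul_comm, smul_mul_assoc, mul_one]

variable [NonnegSpectrumClass ℝ A]

lemma norm_le_of_nonneg_of_le_algebraMap {a : A} (ha : 0 ≤ a) {r : ℝ} (hr : 0 ≤ r)
    (h : a ≤ algebraMap ℝ A r) : ‖a‖ ≤ r := by
  rw [← cfc_id' ℝ a]
  refine norm_cfc_le hr fun x hx => ?_
  rw [Real.norm_eq_abs, abs_of_nonneg (spectrum_nonneg_of_nonneg ha hx)]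
  exact (le_algebraMap_iff_spectrum_le (IsSelfAdjoint.of_nonneg ha)).mp h x hx

lemma norm_mul_sq_le_of_star_mul_self_le [CStarRing A] {x q m : A} {r : ℝ} (hr : 0 ≤ r)
    (hm : IsSelfAdjoint m) (hmqm : m * q * m = 1) (h : star x * x ≤ r • q) :
    ‖x * m‖ ^ 2 ≤ r := by
  have hconj : star (x * m) * (x * m) = m * (star x * x) * m := by
    simp only [star_mul, hm.star_eq, mul_assoc]
  rw [sq, ← CStarRing.norm_star_mul_self, hconj]
  refine norm_le_of_nonneg_of_le_algebraMap (hm.conjugate_nonneg (star_mul_self_nonneg x)) hr ?_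
  calc m * (star x * x) * m ≤ m * (r • q) * m := hm.conjugate_le_conjugate h
    _ = algebraMap ℝ A r := by
      rw [mul_smul_comm, smul_mul_assoc, hmqm, Algebra.algebraMap_eq_smul_one]

end RealCStar

section SqrtCFC

variable {A : Type*} [Ring A] [Algebra ℝ A]

lemma mem_spectrum_of_mem_spectrum_add_algebraMap {a : A} {r y : ℝ}
    (hy : y ∈ spectrum ℝ (a + algebraMap ℝ A r)) : y - r ∈ spectrum ℝ a := by
  rw [← spectrum.add_singleton_eq, Set.add_singleton] at hy
  obtain ⟨x, hx, rfl⟩ := hy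
  simpa using hx

lemma spectrum_add_algebraMap_pos [PartialOrder A] [StarRing A] [TopologicalSpace A]
    [ContinuousFunctionalCalculus ℝ A IsSelfAdjoint] [NonnegSpectrumClass ℝ A] {a : A} (ha : 0 ≤ a)
    {r : ℝ} (hr : 0 < r) : ∀ y ∈ spectrum ℝ (a + algebraMap ℝ A r), 0 < y := fun y hy => by
  linarith [spectrum_nonneg_of_nonneg ha (mem_spectrum_of_mem_spectrum_add_algebraMap hy)]

lemma continuousOn_inv_sqrt {p : A} (hpos : ∀ x ∈ spectrum ℝ p, 0 < x) :
    ContinuousOn (fun x => (√x)⁻¹) (spectrum ℝ p) :=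
  Real.continuous_sqrt.continuousOn.inv₀ fun x hx => (Real.sqrt_pos.2 (hpos x hx)).ne'

variable [StarRing A] [TopologicalSpace A] [ContinuousFunctionalCalculus ℝ A IsSelfAdjoint]

lemma cfc_eq_cfc_add_algebraMap [T2Space A] (f : ℝ → ℝ) {a : A} (r : ℝ) (ha : IsSelfAdjoint a)
    (hf : ContinuousOn f (spectrum ℝ a)) :
    cfc f a = cfc (fun y => f (y - r)) (a + algebraMap ℝ A r) := by
  have hshift : a + algebraMap ℝ A r = cfc (fun x => x + r) a := by
    rw [cfc_add_const r (fun x => x) a, cfc_id' ℝ a]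
  have hf' : ContinuousOn (fun y => f (y - r)) ((fun x => x + r) '' spectrum ℝ a) :=
    hf.comp (continuous_sub_right r).continuousOn (by rintro _ ⟨x, hx, rfl⟩; simpa using hx)
  rw [hshift, ← cfc_comp' (fun y => f (y - r)) (fun x => x + r) a hf']
  simp only [add_sub_cancel_right]

variable {p : A} (hpos : ∀ x ∈ spectrum ℝ p, 0 < x)
include hpos

lemma cfc_sqrt_mul_cfc_mul_cfc_sqrt (f : ℝ → ℝ) (hf : ContinuousOn f (spectrum ℝ p)) :
    cfc Real.sqrt p * cfc f p * cfc Real.sqrt p = cfc (fun x => x * f x) p := by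
  rw [← cfc_mul _ _ p, ← cfc_mul (fun x => √x * f x) Real.sqrt p
    (Real.continuous_sqrt.continuousOn.mul hf)]
  refine cfc_congr fun x hx => ?_
  rw [mul_comm, ← mul_assoc, Real.mul_self_sqrt (hpos x hx).le]

variable (hp : IsSelfAdjoint p)
include hp

lemma cfc_sqrt_mul_cfc_inv_sqrt : cfc Real.sqrt p * cfc (fun x => (√x)⁻¹) p = 1 := by
  rw [← cfc_mul _ _ p (hg := continuousOn_inv_sqrt hpos)]
  exact (cfc_congr fun x hx => mul_inv_cancel₀ (Real.sqrt_pos.2 (hpos x hx)).ne').trans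
    (cfc_const_one ℝ p)

lemma cfc_sqrt_mul_self : cfc Real.sqrt p * cfc Real.sqrt p = p := by
  rw [← cfc_mul ..]
  exact (cfc_congr fun x hx => Real.mul_self_sqrt (hpos x hx).le).trans (cfc_id' ℝ p)

lemma cfc_inv_sqrt_mul_self_mul_cfc_inv_sqrt :
    cfc (fun x => (√x)⁻¹) p * p * cfc (fun x => (√x)⁻¹) p = 1 := by
  have hc := continuousOn_inv_sqrt hpos
  nth_rw 2 [← cfc_id' ℝ p]
  rw [← cfc_mul (fun x => (√x)⁻¹) (fun x => x) p hc continuousOn_id,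
    ← cfc_mul (fun x => (√x)⁻¹ * x) (fun x => (√x)⁻¹) p (hc.mul continuousOn_id) hc]
  refine (cfc_congr fun x hx => ?_).trans (cfc_const_one ℝ p)
  have hs := Real.sqrt_pos.2 (hpos x hx)
  field_simp
  rw [Real.sq_sqrt (hpos x hx).le]

end SqrtCFC

section RelativeBound

variable {A : Type*} [NormedRing A] [StarRing A] [NormedAlgebra ℝ A] [PartialOrder A]
  [StarOrderedRing A] [IsometricContinuousFunctionalCalculus ℝ A IsSelfAdjoint]

lemma one_sub_smul_le_of_norm_inv_sqrt_conj_le {p q : A} (hp : IsSelfAdjoint p)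
    (hppos : ∀ x ∈ spectrum ℝ p, 0 < x) (hq : IsSelfAdjoint q) {c : ℝ}
    (h : ‖cfc (fun x => (√x)⁻¹) p * (p - q) * cfc (fun x => (√x)⁻¹) p‖ ≤ c) :
    (1 - c) • p ≤ q := by
  have hpq : p - q ≤ c • p := by
    simpa only [cfc_sqrt_mul_self hppos hp] using le_smul_mul_self_of_norm_conj_le
      (cfc_predicate _ _) (cfc_predicate _ _) (cfc_sqrt_mul_cfc_inv_sqrt hppos hp) (hp.sub hq) h
  rw [sub_smul, one_smul]
  exact sub_le_comm.mp hpq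

variable [CStarRing A] [StarModule ℝ A] [NonnegSpectrumClass ℝ A]

theorem norm_cfc_sqrt_mul_cfc_mul_cfc_sqrt_le {p q : A} (hp : IsSelfAdjoint p)
    (hppos : ∀ x ∈ spectrum ℝ p, 0 < x) (hq : IsSelfAdjoint q) (hqpos : ∀ y ∈ spectrum ℝ q, 0 < y)
    {c : ℝ} (hc : c < 1) (h : ‖cfc (fun x => (√x)⁻¹) p * (p - q) * cfc (fun x => (√x)⁻¹) p‖ ≤ c)
    {f : ℝ → ℝ} (hf : ContinuousOn f (spectrum ℝ q)) {B : ℝ} (hB : 0 ≤ B)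
    (hfB : ∀ y ∈ spectrum ℝ q, |y * f y| ≤ B) :
    ‖cfc Real.sqrt p * cfc f q * cfc Real.sqrt p‖ ≤ B / (1 - c) := by
  have hpq := one_sub_smul_le_of_norm_inv_sqrt_conj_le hp hppos hq h
  have htt := cfc_sqrt_mul_self hppos hp
  have hmm' := cfc_sqrt_mul_cfc_inv_sqrt hqpos hq
  have hm'qm' := cfc_inv_sqrt_mul_self_mul_cfc_inv_sqrt hqpos hq
  have hmid : ‖cfc Real.sqrt q * cfc f q * cfc Real.sqrt q‖ ≤ B := by
    rw [cfc_sqrt_mul_cfc_mul_cfc_sqrt hqpos f hf]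
    exact norm_cfc_le hB hfB
  set t := cfc Real.sqrt p
  set m := cfc Real.sqrt q
  set m' := cfc (fun y => (√y)⁻¹) q
  have ht : IsSelfAdjoint t := cfc_predicate _ _
  have hm : IsSelfAdjoint m := cfc_predicate _ _
  have hm' : IsSelfAdjoint m' := cfc_predicate _ _
  have hp_le : star t * t ≤ (1 - c)⁻¹ • q := by
    rw [ht.star_eq, htt, ← inv_smul_smul₀ (sub_pos.2 hc).ne' p]
    exact smul_le_smul_of_nonneg_left hpq (inv_nonneg.2 (sub_pos.2 hc).le)
  have htm : ‖t * m'‖ ^ 2 ≤ (1 - c)⁻¹ :=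
    norm_mul_sq_le_of_star_mul_self_le (inv_nonneg.2 (sub_pos.2 hc).le) hm' hm'qm' hp_le
  have hm'm : m' * m = 1 := by simpa [hm.star_eq, hm'.star_eq] using congrArg star hmm'
  have hsplit : t * cfc f q * t = (t * m') * (m * cfc f q * m) * star (t * m') := by
    rw [star_mul, ht.star_eq, hm'.star_eq]
    simp only [← mul_assoc, mul_assoc t m' m, hm'm, mul_one]
    rw [mul_assoc _ m m', hmm', mul_one]
  calc ‖t * cfc f q * t‖ ≤ ‖t * m'‖ ^ 2 * ‖m * cfc f q * m‖ := by
        rw [hsplit]; exact norm_mul_mul_star_le _ _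
    _ ≤ (1 - c)⁻¹ * B := by gcongr
    _ = B / (1 - c) := by ring

end RelativeBound

lemma abs_add_mul_le_two_mul {x lam b y : ℝ} (hlam : 0 < lam) (h1 : |y| ≤ b / lam)
    (h2 : |y * x| ≤ b) : |(x + lam) * y| ≤ 2 * b := by
  have hlam_y : lam * |y| ≤ b := by rwa [le_div_iff₀' hlam] at h1
  calc |(x + lam) * y| = |y * x + lam * y| := by congr 1; ring
    _ ≤ |y * x| + lam * |y| := (abs_add_le _ _).trans_eq (by rw [abs_mul lam y, abs_of_pos hlam])
    _ ≤ 2 * b := by linarith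

lemma div_one_sub_le_mul_sqrt_one_div_one_sub_two_mul {B c : ℝ} (hB : 0 ≤ B) (hc : c < 1 / 2) :
    B / (1 - c) ≤ B * √(1 / (1 - 2 * c)) := by
  have h2c : 0 < 1 - 2 * c := by linarith
  have hinv : (1 - c)⁻¹ ≤ √(1 / (1 - 2 * c)) := by
    rw [Real.le_sqrt (inv_nonneg.2 (by linarith)) (by positivity), inv_pow, one_div]
    exact inv_anti₀ h2c (by nlinarith [sq_nonneg c])
  rw [div_eq_mul_inv]
  exact mul_le_mul_of_nonneg_left hinv hB

section MatrixFunctions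

open scoped Matrix.Norms.L2Operator MatrixOrder

lemma matFun_eq_cfc {d : ℕ} {A : Matrix (Fin d) (Fin d) ℝ} (hA : A.IsHermitian) (f : ℝ → ℝ) :
    matFun A f = cfc f A := by
  rw [hA.cfc_eq, IsHermitian.cfc, matFun, dif_pos hA, Unitary.conjStarAlgAut_apply]
  rfl

lemma opNorm_eq_norm {d : ℕ} (A : Matrix (Fin d) (Fin d) ℝ) : opNorm A = ‖A‖ := rfl

lemma abs_mul_apply_sub_le_of_eigenvalues {d : ℕ} {A : Matrix (Fin d) (Fin d) ℝ}
    (hA : A.IsHermitian) {g : ℝ → ℝ} {lam b : ℝ} (hlam : 0 < lam)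
    (hg1 : ∀ i, |g (hA.eigenvalues i)| ≤ b / lam)
    (hg2 : ∀ i, |g (hA.eigenvalues i) * hA.eigenvalues i| ≤ b) :
    ∀ y ∈ spectrum ℝ (A + algebraMap ℝ _ lam), |y * g (y - lam)| ≤ 2 * b := by
  intro y hy
  obtain ⟨i, hi⟩ : y - lam ∈ Set.range hA.eigenvalues :=
    hA.spectrum_real_eq_range_eigenvalues ▸ mem_spectrum_of_mem_spectrum_add_algebraMap hy
  have := abs_add_mul_le_two_mul hlam (hg1 i) (hg2 i)
  rwa [hi, sub_add_cancel] at this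

theorem statement4_general {d : ℕ} (S Shat : Matrix (Fin d) (Fin d) ℝ)
    (hS : S.PosSemidef) (hShat : Shat.PosSemidef) (lam b c : ℝ)
    (hlam : 0 < lam) (hb : 0 < b) (hc : c < 1 / 2)
    (h : opNorm ((matFun (S + lam • 1) Real.sqrt)⁻¹ * (S - Shat) *
        (matFun (S + lam • 1) Real.sqrt)⁻¹) ≤ c)
    (g : ℝ → ℝ)
    (hg1 : ∀ i : Fin d, |g (hShat.1.eigenvalues i)| ≤ b / lam)
    (hg2 : ∀ i : Fin d, |g (hShat.1.eigenvalues i) * hShat.1.eigenvalues i| ≤ b) :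
    opNorm (matFun (S + lam • 1) Real.sqrt * matFun Shat g * matFun (S + lam • 1) Real.sqrt) ≤
      2 * b * Real.sqrt (1 / (1 - 2 * c)) := by
  rw [← Algebra.algebraMap_eq_smul_one] at h ⊢
  have hS' : 0 ≤ S := nonneg_iff_posSemidef.2 hS
  have hShat' : 0 ≤ Shat := nonneg_iff_posSemidef.2 hShat
  have hp := hS'.isSelfAdjoint.add (.algebraMap _ (.all lam))
  have hq := hShat'.isSelfAdjoint.add (.algebraMap _ (.all lam))
  have hppos := spectrum_add_algebraMap_pos hS' hlam
  rw [matFun_eq_cfc hp, inv_eq_right_inv (cfc_sqrt_mul_cfc_inv_sqrt hppos hp),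
    ← add_sub_add_right_eq_sub S Shat (algebraMap ℝ _ lam)] at h
  rw [opNorm_eq_norm, matFun_eq_cfc hp, matFun_eq_cfc hShat.1,
    cfc_eq_cfc_add_algebraMap g lam hShat'.isSelfAdjoint (finite_real_spectrum.continuousOn g)]
  calc _ ≤ 2 * b / (1 - c) :=
        norm_cfc_sqrt_mul_cfc_mul_cfc_sqrt_le hp hppos hq (spectrum_add_algebraMap_pos hShat' hlam)
          (by linarith) h (finite_real_spectrum.continuousOn _) (by positivity)
          (abs_mul_apply_sub_le_of_eigenvalues hShat.1 hlam hg1 hg2)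
    _ ≤ 2 * b * √(1 / (1 - 2 * c)) :=
        div_one_sub_le_mul_sqrt_one_div_one_sub_two_mul (by positivity) hc

/-- If `Σ, Σ̂` are PSD, `λ > 0`, `b > 0`, `0 ≤ c̃ < 1/2` with
`‖(Σ+λI)^{-1/2} (Σ - Σ̂) (Σ+λI)^{-1/2}‖ ≤ c̃`, and `g` satisfies `|g(σ)| ≤ b/λ` and
`|g(σ)σ| ≤ b` for every eigenvalue `σ` of `Σ̂`, then
`‖(Σ+λI)^{1/2} g(Σ̂) (Σ+λI)^{1/2}‖ ≤ 2b √(1/(1-2c̃))`. -/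
theorem statement4 {d : ℕ} (hd : 0 < d) (S Shat : Matrix (Fin d) (Fin d) ℝ)
    (hS : S.PosSemidef) (hShat : Shat.PosSemidef) (lam b c : ℝ)
    (hlam : 0 < lam) (hb : 0 < b) (hc0 : 0 ≤ c) (hc : c < 1 / 2)
    (h : opNorm ((matFun (S + lam • 1) Real.sqrt)⁻¹ * (S - Shat) *
        (matFun (S + lam • 1) Real.sqrt)⁻¹) ≤ c)
    (g : ℝ → ℝ)
    (hg1 : ∀ i : Fin d, |g (hShat.1.eigenvalues i)| ≤ b / lam)
    (hg2 : ∀ i : Fin d, |g (hShat.1.eigenvalues i) * hShat.1.eigenvalues i| ≤ b) :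
    opNorm (matFun (S + lam • 1) Real.sqrt * matFun Shat g * matFun (S + lam • 1) Real.sqrt) ≤
      2 * b * Real.sqrt (1 / (1 - 2 * c)) :=
  statement4_general S Shat hS hShat lam b c hlam hb hc h g hg1 hg2

end MatrixFunctions
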